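/- arXiv:1609.08964 — 3 statements merged into one kernel-verified Lean document; each statement's English description precedes it below -/
import Mathlib

section
/- Let G = (V,E) be a finite, connected, simple, unweighted graph whose girth is greater than 5, with normalized Laplacian. Fix a vertex x ∈ V with neighbors y₁, …, y_n (so d_x = n), and let k_i = d_{y_i} be the degree of y_i for i = 1, …, n. Set k = min₁≤i≤n (2 − k_i)/k_i. Then G satisfies the CD(k,2) condition at x: for every function f : V → ℝ, Γ₂(f)(x) ≥ ½ (Δf)²(x) + k · Γ(f)(x). -/
open Finset

/-- The normalized (unweighted) graph Laplacian:
`Δ f x = (1 / d_x) * Σ_{y ∈ N_x} (f y - f x)`. -/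
noncomputable def lap {V : Type*} (G : SimpleGraph V) [∀ v, Fintype (G.neighborSet v)]
    (f : V → ℝ) (x : V) : ℝ :=
  (1 / (G.degree x : ℝ)) * ∑ y ∈ G.neighborFinset x, (f y - f x)

/-- The gradient form `Γ(f,g)(x) = ½ (Δ(fg) - f Δg - g Δf)(x)`. -/
noncomputable def gam {V : Type*} (G : SimpleGraph V) [∀ v, Fintype (G.neighborSet v)]
    (f g : V → ℝ) (x : V) : ℝ :=
  (1 / 2) * (lap G (f * g) x - f x * lap G g x - g x * lap G f x)

/-- The iterated gradient form `Γ₂(f)(x) = ½ Δ(Γ f)(x) - Γ(f, Δf)(x)`. -/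
noncomputable def gam2 {V : Type*} (G : SimpleGraph V) [∀ v, Fintype (G.neighborSet v)]
    (f : V → ℝ) (x : V) : ℝ :=
  (1 / 2) * lap G (fun y => gam G f f y) x - gam G f (lap G f) x

lemma gam_eq {V : Type*} (G : SimpleGraph V) [∀ v, Fintype (G.neighborSet v)]
    (f g : V → ℝ) (x : V) :
    gam G f g x = (1 / (2 * (G.degree x : ℝ))) *
      ∑ y ∈ G.neighborFinset x, (f y - f x) * (g y - g x) := by
  unfold gam lap
  simp only [Pi.mul_apply, Finset.mul_sum]
  rw [← Finset.sum_sub_distrib, ← Finset.sum_sub_distrib, Finset.mul_sum]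
  apply Finset.sum_congr rfl
  intro y _
  ring

lemma key_ineq {V : Type*} [Fintype V] (G : SimpleGraph V) [DecidableRel G.Adj]
    (f : V → ℝ) (x y : V) (hxy : x ∈ G.neighborFinset y) (K : ℝ)
    (hK : K ≤ (2 - (G.degree y : ℝ)) / (G.degree y : ℝ)) :
    (1 / 2 + K) * (f y - f x) ^ 2 ≤ gam G f f y - (f y - f x) * lap G f y := by
  have hd : 0 < (G.degree y : ℝ) := by
    have : 0 < G.degree y := by
      rw [← SimpleGraph.card_neighborFinset_eq_degree]
      exact Finset.card_pos.mpr ⟨x, hxy⟩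
    exact_mod_cast this
  set d : ℝ := (G.degree y : ℝ) with hdef
  set a : ℝ := f y - f x with ha
  rw [gam_eq]
  unfold lap
  set N := G.neighborFinset y with hN
  have hcard : (N.card : ℝ) = d := by
    rw [hN, hdef]; exact_mod_cast congrArg Nat.cast (SimpleGraph.card_neighborFinset_eq_degree G y)
  have expand : ∑ w ∈ N, (f w - f y - a) ^ 2
      = ∑ w ∈ N, (f w - f y) * (f w - f y) - 2 * a * ∑ w ∈ N, (f w - f y) + d * a ^ 2 := by
    have h1 : ∀ w ∈ N, (f w - f y - a) ^ 2
        = (f w - f y) * (f w - f y) - 2 * a * (f w - f y) + a ^ 2 := fun w _ => by ring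
    rw [Finset.sum_congr rfl h1, Finset.sum_add_distrib, Finset.sum_sub_distrib,
      Finset.sum_const, ← Finset.mul_sum, nsmul_eq_mul, hcard]
  have hid : (1 / (2 * d)) * ∑ w ∈ N, (f w - f y) * (f w - f y)
      - a * ((1 / d) * ∑ w ∈ N, (f w - f y))
      = (1 / (2 * d)) * (∑ w ∈ N, (f w - f y - a) ^ 2) - (1 / 2) * a ^ 2 := by
    rw [expand]
    field_simp
    ring
  rw [hid]
  have hQx : (f x - f y - a) ^ 2 ≤ ∑ w ∈ N, (f w - f y - a) ^ 2 :=
    Finset.single_le_sum (f := fun w => (f w - f y - a) ^ 2) (fun w _ => sq_nonneg _) hxy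
  have hQ4 : 4 * a ^ 2 ≤ ∑ w ∈ N, (f w - f y - a) ^ 2 := by
    have : (f x - f y - a) ^ 2 = 4 * a ^ 2 := by rw [ha]; ring
    linarith
  have h1 : (1 / (2 * d)) * (4 * a ^ 2) ≤ (1 / (2 * d)) * ∑ w ∈ N, (f w - f y - a) ^ 2 := by
    apply mul_le_mul_of_nonneg_left hQ4
    positivity
  have h2 : (1 / (2 * d)) * (4 * a ^ 2) = (2 / d) * a ^ 2 := by
    field_simp; ring
  have h3 : K * a ^ 2 ≤ (2 / d - 1) * a ^ 2 := by
    apply mul_le_mul_of_nonneg_right _ (sq_nonneg a)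
    have hdd : (2 - d) / d = 2 / d - 1 := by field_simp
    linarith [hK.trans_eq hdd]
  linarith

/-- a finite, connected, simple graph with girth > 5 satisfies the CD(k,2)
condition at x, where k = min over neighbors y of x of (2 - d_y)/d_y. -/
theorem cd_k_two_of_large_girth {V : Type*} [Fintype V] (G : SimpleGraph V)
    [DecidableRel G.Adj] (hconn : G.Connected) (hgirth : 5 < G.egirth)
    (x : V) (hx : (G.neighborFinset x).Nonempty) (f : V → ℝ) :
    gam2 G f x ≥
      (1 / 2) * (lap G f x) ^ 2 +
        ((G.neighborFinset x).inf' hx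
            (fun y => (2 - (G.degree y : ℝ)) / (G.degree y : ℝ))) * gam G f f x := by
  classical
  have hn0 : 0 < (G.degree x : ℝ) := by
    have : 0 < G.degree x := by
      rw [← SimpleGraph.card_neighborFinset_eq_degree]
      exact Finset.card_pos.mpr hx
    exact_mod_cast this
  set N := G.neighborFinset x with hN
  set n : ℝ := (G.degree x : ℝ) with hndef
  have hn : 0 < n := hn0
  have hcard : (N.card : ℝ) = n := by
    rw [hN, hndef]; exact_mod_cast congrArg Nat.cast (SimpleGraph.card_neighborFinset_eq_degree G x)
  set K : ℝ := N.inf' hx (fun y => (2 - (G.degree y : ℝ)) / (G.degree y : ℝ)) with hKdef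
  set S : ℝ := lap G f x with hS
  set Gx : ℝ := gam G f f x with hGx
  -- sum of a_y equals n * S
  have hsum_a : ∑ y ∈ N, (f y - f x) = n * S := by
    rw [hS]
    show ∑ y ∈ N, (f y - f x) = n * ((1 / n) * ∑ y ∈ N, (f y - f x))
    rw [← mul_assoc, mul_one_div, div_self hn.ne', one_mul]
  -- Gx as a sum
  have hGx_sum : Gx = (1 / (2 * n)) * ∑ y ∈ N, (f y - f x) * (f y - f x) := by
    rw [hGx, gam_eq]
  -- expand gam2
  have hgam2 : gam2 G f x
      = (1 / (2 * n)) * ∑ y ∈ N, (gam G f f y - (f y - f x) * lap G f y)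
        - (1 / 2) * Gx + (1 / 2) * S ^ 2 := by
    unfold gam2
    rw [gam_eq]
    conv_lhs => rw [show lap G (fun y => gam G f f y) x
      = (1 / n) * ∑ y ∈ N, (gam G f f y - gam G f f x) from rfl]
    rw [Finset.sum_sub_distrib, Finset.sum_const, nsmul_eq_mul, hcard]
    have hsplit : ∑ y ∈ N, (f y - f x) * (lap G f y - lap G f x)
        = ∑ y ∈ N, (f y - f x) * lap G f y - S * (n * S) := by
      rw [← hsum_a, Finset.mul_sum, ← Finset.sum_sub_distrib]
      apply Finset.sum_congr rfl
      intro y _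
      ring
    rw [hsplit, Finset.sum_sub_distrib, ← hndef]
    field_simp
    ring
  rw [ge_iff_le, hgam2]
  have hterm : ∑ y ∈ N, (1 / 2 + K) * ((f y - f x) * (f y - f x))
      ≤ ∑ y ∈ N, (gam G f f y - (f y - f x) * lap G f y) := by
    apply Finset.sum_le_sum
    intro y hy
    have hxy : x ∈ G.neighborFinset y := by
      rw [SimpleGraph.mem_neighborFinset]
      exact ((SimpleGraph.mem_neighborFinset G x y).mp hy).symm
    have hKy : K ≤ (2 - (G.degree y : ℝ)) / (G.degree y : ℝ) := Finset.inf'_le _ hy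
    calc (1 / 2 + K) * ((f y - f x) * (f y - f x))
        = (1 / 2 + K) * (f y - f x) ^ 2 := by ring
      _ ≤ _ := key_ineq G f x y hxy K hKy
  have hpos : (0 : ℝ) < 1 / (2 * n) := by positivity
  have hmul : (1 / (2 * n)) * ∑ y ∈ N, (1 / 2 + K) * ((f y - f x) * (f y - f x))
      ≤ (1 / (2 * n)) * ∑ y ∈ N, (gam G f f y - (f y - f x) * lap G f y) :=
    mul_le_mul_of_nonneg_left hterm (le_of_lt hpos)
  have hleft : (1 / (2 * n)) * ∑ y ∈ N, (1 / 2 + K) * ((f y - f x) * (f y - f x))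
      = (1 / 2) * Gx + K * Gx := by
    rw [← Finset.mul_sum, hGx_sum]; ring
  linarith [hmul, hleft]
end

section
/- Let G = (V,E) be a finite, connected, simple, unweighted graph whose girth is greater than 5, with normalized Laplacian. Fix a vertex x ∈ V with d_x = n. Then for every function f : V → ℝ with f > 0 everywhere and Δf(x) < 0, G satisfies the CDE(−n/2 − 1, 2) condition at x: Γ₂(f)(x) − Γ(f, Γ(f)/f)(x) ≥ ½ (Δf)²(x) + (−n/2 − 1) · Γ(f)(x). -/
open Finset

lemma Py {V : Type*} (G : SimpleGraph V) [∀ v, Fintype (G.neighborSet v)]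
    (f : V → ℝ) (A : ℝ) (hA : 0 < A) (y : V) (hy : 0 < f y) :
    A * gam G f f y / f y - (f y - A) * lap G f y ≥
      -(f y - A)^2/2 - (f y - A)^3/(2*A) := by
  have hA' : A ≠ 0 := ne_of_gt hA
  have hy' : f y ≠ 0 := ne_of_gt hy
  have hrhs : -(f y - A)^2/2 - (f y - A)^3/(2*A) = -((f y - A)^2 * f y/(2*A)) := by
    field_simp; ring
  rw [hrhs, gam_eq]
  simp only [lap]
  rcases Nat.eq_zero_or_pos (G.degree y) with hd | hd
  · have hemp : G.neighborFinset y = ∅ := by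
      apply Finset.card_eq_zero.mp
      rw [G.card_neighborFinset_eq_degree, hd]
    rw [hemp]
    simp only [Finset.sum_empty, mul_zero, zero_div, zero_sub, sub_zero]
    have h0 : 0 ≤ (f y - A)^2 * f y/(2*A) := by positivity
    nlinarith [h0]
  · have hcard : ((G.neighborFinset y).card : ℝ) = (G.degree y : ℝ) := by
      rw [G.card_neighborFinset_eq_degree]
    set m : ℝ := (G.degree y : ℝ) with hm
    have hm0 : 0 < m := by positivity
    have hm' : m ≠ 0 := ne_of_gt hm0
    set s := G.neighborFinset y with hs
    have hsplit : ∑ z ∈ s, (A*(f z - f y)^2/(2*f y) - (f y - A)*(f z - f y))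
        = (A/(2*f y)) * ∑ z ∈ s, (f z - f y)*(f z - f y)
          - (f y - A) * ∑ z ∈ s, (f z - f y) := by
      rw [Finset.sum_sub_distrib, Finset.mul_sum, Finset.mul_sum]
      congr 1
      refine Finset.sum_congr rfl fun z _ => by ring
    have hper : ∀ z ∈ s, -((f y - A)^2 * f y/(2*A))
        ≤ A*(f z - f y)^2/(2*f y) - (f y - A)*(f z - f y) := by
      intro z _
      rw [← sub_nonneg]
      have h1 : A*(f z - f y)^2/(2*f y) - (f y - A)*(f z - f y) - -((f y - A)^2 * f y/(2*A))
          = (A*(f z - f y) - (f y - A)*f y)^2 / (2*A*f y) := by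
        field_simp; ring
      rw [h1]
      positivity
    have hsum := Finset.card_nsmul_le_sum s _ _ hper
    rw [nsmul_eq_mul, hcard] at hsum
    have hLHS : A * ((1 / (2*m)) * ∑ z ∈ s, (f z - f y)*(f z - f y)) / f y
        - (f y - A) * ((1/m) * ∑ z ∈ s, (f z - f y))
        = (1/m) * ((A/(2*f y)) * ∑ z ∈ s, (f z - f y)*(f z - f y)
          - (f y - A) * ∑ z ∈ s, (f z - f y)) := by
      field_simp
    rw [ge_iff_le, hLHS, ← hsplit]
    calc -((f y - A)^2 * f y/(2*A)) = (1/m) * (m * -((f y - A)^2 * f y/(2*A))) := by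
          field_simp
      _ ≤ (1/m) * ∑ z ∈ s, (A*(f z - f y)^2/(2*f y) - (f y - A)*(f z - f y)) := by
          apply mul_le_mul_of_nonneg_left hsum (by positivity)

lemma gsum {α : Type*} [DecidableEq α] (s : Finset α) (A : ℝ) (hA : 0 < A) (b : α → ℝ)
    (hb : ∀ i ∈ s, -A < b i) (h1 : ∑ i ∈ s, b i ≤ 0) :
    0 ≤ (s.card : ℝ) * ((s.card : ℝ) * A * (∑ i ∈ s, (b i)^2) - ∑ i ∈ s, (b i)^3)
      + (∑ i ∈ s, b i) * (∑ i ∈ s, (b i)^2) := by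
  classical
  rcases s.eq_empty_or_nonempty with rfl | hne
  · simp
  have hcard1 : 1 ≤ s.card := Finset.card_pos.mpr hne
  have hcard1' : (1:ℝ) ≤ (s.card : ℝ) := by exact_mod_cast hcard1
  have hT2 : 0 ≤ ∑ i ∈ s, (b i)^2 := Finset.sum_nonneg fun i _ => sq_nonneg _
  -- T1 ≥ -card * A
  have hT1lb : -(s.card : ℝ) * A ≤ ∑ i ∈ s, b i := by
    have := Finset.sum_le_sum (f := fun i => -A) (g := b) fun i hi => le_of_lt (hb i hi)
    simpa [Finset.sum_const, nsmul_eq_mul, neg_mul, mul_comm] using this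
  -- per-element bound for positive entries
  have hkey : ∀ i ∈ s, 0 < b i → b i ≤ ((s.card : ℝ) - 1) * A := by
    intro i hi hbi
    set p : Finset α := s.filter (fun j => 0 < b j) with hp
    set t : Finset α := s.filter (fun j => ¬ (0 < b j)) with ht
    have hip : i ∈ p := Finset.mem_filter.mpr ⟨hi, hbi⟩
    have h2 : b i ≤ ∑ j ∈ p, b j :=
      Finset.single_le_sum (fun j hj => le_of_lt (Finset.mem_filter.mp hj).2) hip
    have h3 : ∑ j ∈ p, b j + ∑ j ∈ t, b j = ∑ j ∈ s, b j :=
      Finset.sum_filter_add_sum_filter_not s (fun j => 0 < b j) b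
    have h4 : -(t.card : ℝ) * A ≤ ∑ j ∈ t, b j := by
      have := Finset.sum_le_sum (s := t) (f := fun j => -A) (g := b)
        fun j hj => le_of_lt (hb j (Finset.mem_filter.mp hj).1)
      simpa [Finset.sum_const, nsmul_eq_mul, neg_mul] using this
    have h5 : t.card ≤ s.card - 1 := by
      have hsub : t ⊆ s.erase i := by
        intro j hj
        rcases Finset.mem_filter.mp hj with ⟨hjs, hjb⟩
        refine Finset.mem_erase.mpr ⟨?_, hjs⟩
        rintro rfl; exact hjb hbi
      calc t.card ≤ (s.erase i).card := Finset.card_le_card hsub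
        _ = s.card - 1 := Finset.card_erase_of_mem hi
    have h5' : (t.card : ℝ) ≤ (s.card : ℝ) - 1 := by
      have : (t.card : ℝ) ≤ ((s.card - 1 : ℕ) : ℝ) := by exact_mod_cast h5
      push_cast [Nat.cast_sub hcard1] at this
      linarith
    nlinarith [h2, h3, h4, h5', hA]
  -- T3 ≤ (card - 1) * A * T2
  have hT3 : ∑ i ∈ s, (b i)^3 ≤ ((s.card : ℝ) - 1) * A * ∑ i ∈ s, (b i)^2 := by
    rw [Finset.mul_sum]
    refine Finset.sum_le_sum fun i hi => ?_
    rcases le_or_gt (b i) 0 with h | h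
    · have h3 : (b i)^3 ≤ 0 := Odd.pow_nonpos ⟨1, by norm_num⟩ h
      have h4 : 0 ≤ ((s.card : ℝ) - 1) * A * (b i)^2 :=
        mul_nonneg (mul_nonneg (by linarith) hA.le) (sq_nonneg _)
      linarith
    · have := hkey i hi h
      nlinarith [sq_nonneg (b i)]
  nlinarith [mul_le_mul_of_nonneg_left hT3 (le_trans zero_le_one hcard1'),
    mul_le_mul_of_nonneg_left hT1lb hT2]

/-- a finite, connected, simple graph with girth > 5 satisfies the
CDE(-n/2 - 1, 2) condition at a vertex x of degree n. -/
theorem cde_of_large_girth {V : Type*} [Fintype V] (G : SimpleGraph V)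
    [DecidableRel G.Adj] (hconn : G.Connected) (hgirth : 5 < G.egirth)
    (x : V) (f : V → ℝ) (hf : ∀ v, 0 < f v) (hlap : lap G f x < 0) :
    gam2 G f x - gam G f (fun y => gam G f f y / f y) x ≥
      (1 / 2) * (lap G f x) ^ 2 +
        (-(G.degree x : ℝ) / 2 - 1) * gam G f f x := by
  classical
  have hA : 0 < f x := hf x
  have hA' : f x ≠ 0 := ne_of_gt hA
  have hd0 : G.degree x ≠ 0 := by
    intro h
    rw [lap, h] at hlap
    norm_num at hlap
  set n : ℝ := (G.degree x : ℝ) with hn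
  have hn0 : 0 < n := by
    have h : 0 < G.degree x := Nat.pos_of_ne_zero hd0
    rw [hn]
    exact_mod_cast h
  have hn' : n ≠ 0 := ne_of_gt hn0
  set s := G.neighborFinset x with hs
  set A := f x with hAdef
  have hcard : (s.card : ℝ) = n := by
    rw [hs, hn]; exact_mod_cast G.card_neighborFinset_eq_degree x
  set T1 := ∑ y ∈ s, (f y - A) with hT1def
  set T2 := ∑ y ∈ s, (f y - A)^2 with hT2def
  set T3 := ∑ y ∈ s, (f y - A)^3 with hT3def
  set U1 := ∑ y ∈ s, gam G f f y with hU1def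
  set V1 := ∑ y ∈ s, (f y - A) * lap G f y with hV1def
  set W' := ∑ y ∈ s, gam G f f y / f y with hWdef
  -- basic facts
  have e2 : lap G f x = 1/n * T1 := by rw [lap]
  have e1 : gam G f f x = 1/(2*n) * T2 := by
    rw [gam_eq, ← hn, ← hs]
    congr 1
    exact Finset.sum_congr rfl fun y _ => (sq (f y - A)) ▸ by ring
  have e3 : gam G f (lap G f) x = 1/(2*n) * (V1 - (1/n * T1) * T1) := by
    rw [gam_eq, ← hn, ← hs, ← hAdef]
    have h : ∑ y ∈ s, (f y - A) * (lap G f y - lap G f x)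
        = V1 - lap G f x * T1 := by
      rw [show ∑ y ∈ s, (f y - A) * (lap G f y - lap G f x)
          = ∑ y ∈ s, ((f y - A) * lap G f y - lap G f x * (f y - A)) from
        Finset.sum_congr rfl fun y _ => by ring]
      rw [Finset.sum_sub_distrib, ← Finset.mul_sum, ← hV1def, ← hT1def]
    rw [h, e2]
  have e4 : lap G (fun y => gam G f f y) x = 1/n * (U1 - n * (1/(2*n) * T2)) := by
    rw [lap, ← hn, ← hs]
    congr 1
    rw [show ∑ y ∈ s, ((fun y => gam G f f y) y - (fun y => gam G f f y) x)
        = ∑ y ∈ s, (gam G f f y - gam G f f x) from rfl]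
    rw [Finset.sum_sub_distrib, ← hU1def, Finset.sum_const, nsmul_eq_mul, hcard, e1]
  have e5 : gam G f (fun y => gam G f f y / f y) x
      = 1/(2*n) * ((U1 - A * W') - ((1/(2*n) * T2)/A) * T1) := by
    rw [gam_eq, ← hn, ← hs]
    congr 1
    rw [show ∑ y ∈ s, (f y - f x) * ((fun y => gam G f f y / f y) y
          - (fun y => gam G f f y / f y) x)
        = ∑ y ∈ s, ((f y - A) * (gam G f f y / f y)
            - (gam G f f x / A) * (f y - A)) from
      Finset.sum_congr rfl fun y _ => by rw [← hAdef]; ring]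
    rw [Finset.sum_sub_distrib, ← Finset.mul_sum, ← hT1def, e1]
    have hsplit : ∑ y ∈ s, (f y - A) * (gam G f f y / f y)
        = U1 - A * W' := by
      rw [hU1def, hWdef, Finset.mul_sum, ← Finset.sum_sub_distrib]
      refine Finset.sum_congr rfl fun y hy => ?_
      have hfy : f y ≠ 0 := ne_of_gt (hf y)
      field_simp
    rw [hsplit]
  -- the per-vertex bound summed
  have hQ : A * W' - V1 ≥ -T2/2 - T3/(2*A) := by
    have h := Finset.sum_le_sum (s := s)
      (f := fun y => -(f y - A)^2/2 - (f y - A)^3/(2*A))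
      (g := fun y => A * gam G f f y / f y - (f y - A) * lap G f y)
      (fun y _ => Py G f A hA y (hf y))
    have hL : ∑ y ∈ s, (A * gam G f f y / f y - (f y - A) * lap G f y)
        = A * W' - V1 := by
      rw [Finset.sum_sub_distrib, ← hV1def, hWdef, Finset.mul_sum]
      congr 1
      exact Finset.sum_congr rfl fun y _ => by ring
    have hR : ∑ y ∈ s, (-(f y - A)^2/2 - (f y - A)^3/(2*A))
        = -T2/2 - T3/(2*A) := by
      rw [Finset.sum_sub_distrib, hT2def, hT3def]
      rw [← Finset.sum_div, ← Finset.sum_div, ← Finset.sum_neg_distrib]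
    rw [hL, hR] at h
    exact h
  -- T1 ≤ 0
  have hT1neg : T1 ≤ 0 := by
    rw [e2] at hlap
    by_contra h
    push_neg at h
    have := mul_pos (one_div_pos.mpr hn0) h
    linarith
  -- gsum
  have hgs : 0 ≤ n * (n * A * T2 - T3) + T1 * T2 := by
    have := gsum s A hA (fun y => f y - A)
      (fun y _ => by have := hf y; linarith) hT1neg
    rwa [hcard] at this
  -- final algebra
  simp only [gam2]
  rw [e1, e2, e3, e4, e5, ge_iff_le, ← sub_nonneg]
  have heq : 1/2 * (1/n * (U1 - n * (1/(2*n) * T2))) - 1/(2*n) * (V1 - 1/n * T1 * T1)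
        - 1/(2*n) * ((U1 - A * W') - ((1/(2*n) * T2)/A) * T1)
        - (1/2 * (1/n * T1)^2 + (-n/2 - 1) * (1/(2*n) * T2))
      = ((A * W' - V1) + T2/2 + T3/(2*A)) / (2*n)
        + (n * (n * A * T2 - T3) + T1 * T2) / (4*n^2*A) := by
    field_simp
    ring
  rw [heq]
  have h1 : 0 ≤ ((A * W' - V1) + T2/2 + T3/(2*A)) / (2*n) :=
    div_nonneg (by linarith [hQ]) (by positivity)
  have h2 : 0 ≤ (n * (n * A * T2 - T3) + T1 * T2) / (4*n^2*A) :=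
    div_nonneg hgs (by positivity)
  linarith
end

section
/- Let n ≥ 1 be an integer and let v₁, …, v_n be real numbers, not all zero, satisfying v_i > −1 for every i and Σ_{i=1}^n v_i < 0. Then ( (Σ_{i=1}^n v_i) · (Σ_{i=1}^n v_i²) − n · Σ_{i=1}^n v_i³ ) / ( 2n · Σ_{i=1}^n v_i² ) > −n/2. -/
open Finset

/-- ((Σ v_i)(Σ v_i²) - n Σ v_i³) / (2n Σ v_i²) > -n/2. -/
theorem cde_final_inequality (n : ℕ) (hn : 1 ≤ n) (v : Fin n → ℝ) (hne : v ≠ 0)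
    (hv : ∀ i, -1 < v i) (hsum : ∑ i, v i < 0) :
    ((∑ i, v i) * (∑ i, (v i) ^ 2) - (n : ℝ) * ∑ i, (v i) ^ 3) /
        (2 * (n : ℝ) * ∑ i, (v i) ^ 2) > -(n : ℝ) / 2 := by
  obtain ⟨i₀, hi₀⟩ : ∃ i, v i ≠ 0 := by
    by_contra h
    push_neg at h
    exact hne (funext h)
  have hS2 : 0 < ∑ i, (v i) ^ 2 := by
    apply Finset.sum_pos' (fun i _ => sq_nonneg _)
    exact ⟨i₀, Finset.mem_univ _, by positivity⟩
  have hnpos : (0 : ℝ) < n := by exact_mod_cast hn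
  have hS1 : -(n : ℝ) < ∑ i, v i := by
    have := Finset.sum_lt_sum_of_nonempty (s := (univ : Finset (Fin n)))
      (f := fun _ => (-1 : ℝ)) (g := v)
      (Finset.univ_nonempty_iff.mpr (Fin.pos_iff_nonempty.mp hn))
      (fun i _ => hv i)
    simpa using this
  -- each v i < n - 1
  have hvlt : ∀ i, v i < (n : ℝ) - 1 := by
    intro i
    have hsplit : v i + ∑ j ∈ univ.erase i, v j = ∑ j, v j :=
      Finset.add_sum_erase _ v (Finset.mem_univ i)
    have hrest : -((n : ℝ) - 1) ≤ ∑ j ∈ univ.erase i, v j := by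
      have h1 : ∑ j ∈ univ.erase i, (-1 : ℝ) ≤ ∑ j ∈ univ.erase i, v j :=
        Finset.sum_le_sum (fun j _ => (hv j).le)
      have hcard : (univ.erase i).card = n - 1 := by
        simp [Finset.card_erase_of_mem]
      have hcast : ((n - 1 : ℕ) : ℝ) = (n : ℝ) - 1 := by
        have := Nat.cast_sub hn (R := ℝ); simpa using this
      simpa [hcard, hcast] using h1
    linarith
  have hS3 : ∑ i, (v i) ^ 3 < ((n : ℝ) - 1) * ∑ i, (v i) ^ 2 := by
    rw [Finset.mul_sum]
    apply Finset.sum_lt_sum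
    · intro i _
      have : v i * v i ^ 2 ≤ ((n : ℝ) - 1) * v i ^ 2 :=
        mul_le_mul_of_nonneg_right (hvlt i).le (sq_nonneg _)
      nlinarith [this]
    · refine ⟨i₀, Finset.mem_univ _, ?_⟩
      have hp : (0:ℝ) < v i₀ ^ 2 := by positivity
      nlinarith [mul_lt_mul_of_pos_right (hvlt i₀) hp]
  rw [gt_iff_lt, div_lt_div_iff₀ (by norm_num) (by positivity)]
  nlinarith [mul_lt_mul_of_pos_right hS1 hS2, mul_lt_mul_of_pos_left hS3 hnpos]
end
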